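/- arXiv:2201.12293 — 4 statements merged into one kernel-verified Lean document; each statement's English description precedes it below -/
import Mathlib

section
/- For the logistic loss: suppose x₁,…,xₙ are linearly independent and the GRW weights satisfy Assumption 1. Then there exists η₀ > 0 such that for every learning rate 0 < η ≤ η₀, the normalized iterates θ^{(t)} / ‖θ^{(t)}‖₂ converge as t → ∞ to the unique max-margin classifier u; in particular the limiting direction does not depend on the weights qᵢ^{(t)}. -/
/-!
Write `zᵢ = yᵢ xᵢ`, `γ` for the max margin and `L θ = ∑ pᵢ ℓ(⟪θ, zᵢ⟫)` for the risk with the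
limiting weights `p`. Eventually `q t` is within relative error `w` of `p`, so a GRW step is an
approximate gradient step on `L`. The logistic loss satisfies
`ℓ(s + h) ≤ ℓ(s) + ℓ'(s) h + |ℓ'(s)| h²` for `|h| ≤ 1`, so for `η ≤ 1/4` the risk decreases by
`≳ η ‖∇L‖²`; hence `∇L → 0` and every margin `⟪θ t, zᵢ⟫` tends to infinity.

Once the margins are large, `‖∇L‖ ≥ γ ∑ pᵢ |ℓ'(⟪θ, zᵢ⟫)| ≥ γ (1 - w) L`, and the descent
inequality shows that one step increases `-log L` by at least `(1 - 5w) γ` times the increase of `‖θ‖`. Since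
`e^{-⟪θ, zᵢ⟫} ≲ L`, telescoping gives `⟪θ t, zᵢ⟫ ≥ (γ - δ) ‖θ t‖` eventually. Finally, a unit
vector `v` whose margins are all `≥ γ - δ` satisfies `γ ‖u + v‖ ≥ 2γ - δ`, so by the parallelogram
law it is within `2 √(δ / γ)` of `u`.
-/

open scoped RealInnerProductSpace
open Filter Topology Real

noncomputable def logisticLoss (s : ℝ) : ℝ := log (1 + exp (-s))

lemma logisticLoss_pos (s : ℝ) : 0 < logisticLoss s :=
  log_pos (by linarith [exp_pos (-s)])

lemma logisticLoss_le_exp_neg (s : ℝ) : logisticLoss s ≤ exp (-s) := by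
  have := log_le_sub_one_of_pos (x := 1 + exp (-s)) (by positivity)
  unfold logisticLoss
  linarith

lemma sigmoid_mul_logisticLoss_le (s : ℝ) : sigmoid s * logisticLoss s ≤ sigmoid (-s) := by
  rw [← sigmoid_mul_rexp_neg]
  exact mul_le_mul_of_nonneg_left (logisticLoss_le_exp_neg s) (sigmoid_nonneg s)

lemma exp_neg_le_two_mul_logisticLoss {s : ℝ} (hs : 0 ≤ s) : exp (-s) ≤ 2 * logisticLoss s := by
  have hle : exp (-s) ≤ 1 := exp_le_one_iff.2 (neg_nonpos.2 hs)
  have hlog := one_sub_inv_le_log_of_pos (x := 1 + exp (-s)) (by positivity)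
  have hfrac : exp (-s) / 2 ≤ 1 - (1 + exp (-s))⁻¹ := by
    have : 1 - (1 + exp (-s))⁻¹ = exp (-s) / (1 + exp (-s)) := by field_simp; ring
    rw [this]
    exact div_le_div_of_nonneg_left (exp_pos _).le (by positivity) (by linarith)
  unfold logisticLoss
  linarith

lemma logisticLoss_add_le (s : ℝ) {h : ℝ} (hh : |h| ≤ 1) :
    logisticLoss (s + h) ≤ logisticLoss s - sigmoid (-s) * h + sigmoid (-s) * h ^ 2 := by
  have hexp : exp (-h) - 1 ≤ -h + h ^ 2 := by
    have := abs_exp_sub_one_sub_id_le (x := -h) (by rwa [abs_neg])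
    linarith [(abs_le.1 this).2, neg_sq h]
  have hfac : 1 + exp (-(s + h)) = (1 + exp (-s)) * (1 + sigmoid (-s) * (exp (-h) - 1)) := by
    rw [sigmoid_def, neg_neg, neg_add, exp_add, exp_neg s]
    field_simp
    ring
  have hpos : 0 < 1 + sigmoid (-s) * (exp (-h) - 1) := by
    nlinarith [sigmoid_lt_one (-s), mul_pos (sigmoid_pos (-s)) (exp_pos (-h))]
  have hlog := log_le_sub_one_of_pos hpos
  unfold logisticLoss
  rw [hfac, log_mul (by positivity) hpos.ne']
  nlinarith [sigmoid_pos (-s)]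

lemma tendsto_zero_of_eventually_mul_le_sub {f g : ℕ → ℝ} {c : ℝ} (hc : 0 < c)
    (hf : ∀ t, 0 ≤ f t) (hg : ∀ t, 0 ≤ g t) (h : ∀ᶠ t in atTop, c * g t ≤ f t - f (t + 1)) :
    Tendsto g atTop (𝓝 0) := by
  obtain ⟨N, hN⟩ := eventually_atTop.1 h
  have hsum : ∀ n, ∑ k ∈ Finset.range n, g (k + N) ≤ f N / c := by
    intro n
    rw [le_div_iff₀ hc, Finset.sum_mul]
    calc ∑ k ∈ Finset.range n, g (k + N) * c
        ≤ ∑ k ∈ Finset.range n, (f (k + N) - f (k + 1 + N)) :=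
          Finset.sum_le_sum fun k _ => by
            rw [mul_comm, add_right_comm]; exact hN (k + N) (Nat.le_add_left N k)
      _ = f N - f (n + N) := by
          rw [Finset.sum_range_sub' (fun k => f (k + N))]; simp
      _ ≤ f N := by linarith [hf (n + N)]
  have := (summable_of_sum_range_le (fun k => hg (k + N)) hsum).tendsto_atTop_zero
  exact (tendsto_add_atTop_iff_nat N).1 this

lemma exists_eventually_mul_sub_le {ρ Φ : ℕ → ℝ} {c : ℝ}
    (h : ∀ᶠ t in atTop, c * (ρ (t + 1) - ρ t) ≤ Φ (t + 1) - Φ t) :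
    ∃ C, ∀ᶠ t in atTop, c * ρ t - C ≤ Φ t := by
  obtain ⟨N, hN⟩ := eventually_atTop.1 h
  refine ⟨c * ρ N - Φ N, eventually_atTop.2 ⟨N, fun t ht => ?_⟩⟩
  induction t, ht using Nat.le_induction with
  | base => linarith
  | succ t ht ih => linarith [hN t ht]

lemma tendsto_atTop_of_tendsto_sigmoid_neg {α : Type*} {l : Filter α} {f : α → ℝ}
    (h : Tendsto (fun a => sigmoid (-f a)) l (𝓝 0)) : Tendsto f l atTop := by
  refine tendsto_atTop.2 fun M => ?_
  filter_upwards [h.eventually_lt_const (sigmoid_pos (-M))] with a ha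
  linarith [sigmoid_lt_iff.1 ha]

lemma one_sub_mul_norm_sq_le_real_inner {E : Type*} [NormedAddCommGroup E] [InnerProductSpace ℝ E]
    {a b : E} {w : ℝ} (h : ‖a - b‖ ≤ w * ‖b‖) : (1 - w) * ‖b‖ ^ 2 ≤ ⟪b, a⟫ := by
  have hsplit : ⟪b, a⟫ = ‖b‖ ^ 2 + ⟪b, a - b⟫ := by
    rw [inner_sub_right, real_inner_self_eq_norm_sq]; ring
  have := (abs_le.1 (abs_real_inner_le_norm b (a - b))).1
  nlinarith [norm_nonneg b]

section Risk

variable {E : Type*} [NormedAddCommGroup E] [InnerProductSpace ℝ E] {ι : Type*} [Fintype ι]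

noncomputable def weightedRisk (z : ι → E) (p : ι → ℝ) (θ : E) : ℝ :=
  ∑ i, p i * logisticLoss ⟪θ, z i⟫

/-- `-∇ (weightedRisk z p) θ`; with `z i = yᵢ xᵢ` the GRW update is
`θ + η • riskNegGrad z (q t) θ`. -/
noncomputable def riskNegGrad (z : ι → E) (p : ι → ℝ) (θ : E) : E :=
  ∑ i, (p i * sigmoid (-⟪θ, z i⟫)) • z i

noncomputable def gradMass (z : ι → E) (p : ι → ℝ) (θ : E) : ℝ :=
  ∑ i, p i * sigmoid (-⟪θ, z i⟫)

variable {z : ι → E} {p p' : ι → ℝ} {θ : E}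

lemma real_inner_riskNegGrad (v : E) :
    ⟪riskNegGrad z p θ, v⟫ = ∑ i, p i * sigmoid (-⟪θ, z i⟫) * ⟪z i, v⟫ := by
  simp only [riskNegGrad, sum_inner, real_inner_smul_left]

lemma riskNegGrad_sub : riskNegGrad z p θ - riskNegGrad z p' θ = riskNegGrad z (p - p') θ := by
  simp only [riskNegGrad, ← Finset.sum_sub_distrib, ← sub_smul, ← sub_mul, Pi.sub_apply]

lemma norm_riskNegGrad_le (hz : ∀ i, ‖z i‖ ≤ 1) :
    ‖riskNegGrad z p θ‖ ≤ ∑ i, |p i| * sigmoid (-⟪θ, z i⟫) := by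
  refine (norm_sum_le _ _).trans (Finset.sum_le_sum fun i _ => ?_)
  rw [norm_smul, Real.norm_eq_abs, abs_mul, abs_of_pos (sigmoid_pos _)]
  exact mul_le_of_le_one_right (mul_nonneg (abs_nonneg _) (sigmoid_pos _).le) (hz i)

lemma norm_riskNegGrad_le_gradMass (hz : ∀ i, ‖z i‖ ≤ 1) (hp : ∀ i, 0 ≤ p i) :
    ‖riskNegGrad z p θ‖ ≤ gradMass z p θ := by
  refine (norm_riskNegGrad_le hz).trans_eq (Finset.sum_congr rfl fun i _ => ?_)
  rw [abs_of_nonneg (hp i)]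

lemma norm_riskNegGrad_sub_le (hz : ∀ i, ‖z i‖ ≤ 1) {δ : ℝ} (h : ∀ i, |p i - p' i| ≤ δ * p' i) :
    ‖riskNegGrad z p θ - riskNegGrad z p' θ‖ ≤ δ * gradMass z p' θ := by
  rw [riskNegGrad_sub, gradMass, Finset.mul_sum]
  refine (norm_riskNegGrad_le hz).trans (Finset.sum_le_sum fun i _ => ?_)
  rw [← mul_assoc]
  exact mul_le_mul_of_nonneg_right (h i) (sigmoid_pos _).le

lemma mul_gradMass_le_norm_riskNegGrad (hp : ∀ i, 0 ≤ p i) {u : E} (hu : ‖u‖ ≤ 1) {γ : ℝ}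
    (hγu : ∀ i, γ ≤ ⟪u, z i⟫) : γ * gradMass z p θ ≤ ‖riskNegGrad z p θ‖ :=
  calc γ * gradMass z p θ ≤ ⟪riskNegGrad z p θ, u⟫ := by
        rw [gradMass, Finset.mul_sum, real_inner_riskNegGrad]
        refine Finset.sum_le_sum fun i _ => ?_
        rw [mul_comm γ, real_inner_comm u]
        exact mul_le_mul_of_nonneg_left (hγu i) (mul_nonneg (hp i) (sigmoid_pos _).le)
    _ ≤ ‖riskNegGrad z p θ‖ * ‖u‖ := real_inner_le_norm _ _
    _ ≤ ‖riskNegGrad z p θ‖ := mul_le_of_le_one_right (norm_nonneg _) hu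

lemma gradMass_le (hp : ∀ i, 0 ≤ p i) {w : ℝ} (hσ : ∀ i, sigmoid (-⟪θ, z i⟫) ≤ w) :
    gradMass z p θ ≤ w * ∑ i, p i := by
  rw [gradMass, Finset.mul_sum]
  exact Finset.sum_le_sum fun i _ => by
    rw [mul_comm w]; exact mul_le_mul_of_nonneg_left (hσ i) (hp i)

lemma mul_weightedRisk_le_gradMass (hp : ∀ i, 0 ≤ p i) {w : ℝ}
    (hσ : ∀ i, sigmoid (-⟪θ, z i⟫) ≤ w) : (1 - w) * weightedRisk z p θ ≤ gradMass z p θ := by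
  rw [weightedRisk, gradMass, Finset.mul_sum]
  refine Finset.sum_le_sum fun i _ => ?_
  have hσ' : 1 - w ≤ sigmoid ⟪θ, z i⟫ := by linarith [hσ i, sigmoid_neg ⟪θ, z i⟫]
  have := mul_le_mul_of_nonneg_right hσ' (logisticLoss_pos ⟪θ, z i⟫).le
  nlinarith [hp i, sigmoid_mul_logisticLoss_le ⟪θ, z i⟫]

lemma weightedRisk_pos [Nonempty ι] (hp : ∀ i, 0 < p i) : 0 < weightedRisk z p θ :=
  Finset.sum_pos (fun i _ => mul_pos (hp i) (logisticLoss_pos _)) Finset.univ_nonempty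

lemma weightedRisk_add_le (hz : ∀ i, ‖z i‖ ≤ 1) (hp : ∀ i, 0 ≤ p i) {h : E} (hh : ‖h‖ ≤ 1) :
    weightedRisk z p (θ + h) ≤
      weightedRisk z p θ - ⟪riskNegGrad z p θ, h⟫ + ‖h‖ ^ 2 * gradMass z p θ := by
  have hterm : ∀ i, p i * logisticLoss ⟪θ + h, z i⟫ ≤ p i * logisticLoss ⟪θ, z i⟫
      - p i * sigmoid (-⟪θ, z i⟫) * ⟪z i, h⟫ + ‖h‖ ^ 2 * (p i * sigmoid (-⟪θ, z i⟫)) := by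
    intro i
    have hzh : |⟪z i, h⟫| ≤ 1 :=
      (abs_real_inner_le_norm _ _).trans (mul_le_one₀ (hz i) (norm_nonneg h) hh)
    have hsq : ⟪z i, h⟫ ^ 2 ≤ ‖h‖ ^ 2 := by
      rw [← sq_abs]
      exact pow_le_pow_left₀ (abs_nonneg _)
        ((abs_real_inner_le_norm _ _).trans (mul_le_of_le_one_left (norm_nonneg h) (hz i))) 2
    have hloss := logisticLoss_add_le ⟪θ, z i⟫ hzh
    rw [inner_add_left, real_inner_comm (z i) h]
    have := mul_le_mul_of_nonneg_left hsq (mul_nonneg (hp i) (sigmoid_pos (-⟪θ, z i⟫)).le)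
    nlinarith [hp i]
  calc weightedRisk z p (θ + h) ≤ ∑ i, (p i * logisticLoss ⟪θ, z i⟫
      - p i * sigmoid (-⟪θ, z i⟫) * ⟪z i, h⟫ + ‖h‖ ^ 2 * (p i * sigmoid (-⟪θ, z i⟫))) :=
        Finset.sum_le_sum fun i _ => hterm i
    _ = _ := by
      rw [Finset.sum_add_distrib, Finset.sum_sub_distrib, ← Finset.mul_sum,
        real_inner_riskNegGrad, weightedRisk, gradMass]

lemma weightedRisk_step_le (hz : ∀ i, ‖z i‖ ≤ 1) (hp : ∀ i, 0 ≤ p i) (hA : gradMass z p θ ≤ 1)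
    {w η : ℝ} (hw0 : 0 ≤ w) (hw : w ≤ 1 / 4) (hη0 : 0 < η) (hη : η ≤ 1 / 4) {G : E}
    (hG : ‖G - riskNegGrad z p θ‖ ≤ w * ‖riskNegGrad z p θ‖) :
    weightedRisk z p (θ + η • G) ≤ weightedRisk z p θ
      - η * (1 - w - gradMass z p θ / 2) * ‖riskNegGrad z p θ‖ ^ 2 := by
  set N := ‖riskNegGrad z p θ‖
  set A := gradMass z p θ
  have hNA : N ≤ A := norm_riskNegGrad_le_gradMass hz hp
  have hGN : ‖G‖ ≤ (1 + w) * N := by linarith [norm_le_norm_add_norm_sub' G (riskNegGrad z p θ)]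
  have hηG : ‖η • G‖ = η * ‖G‖ := by rw [norm_smul, Real.norm_of_nonneg hη0.le]
  have hsmall : ‖η • G‖ ≤ 1 := by rw [hηG]; nlinarith [norm_nonneg G]
  have hinner : η * ((1 - w) * N ^ 2) ≤ ⟪riskNegGrad z p θ, η • G⟫ := by
    rw [real_inner_smul_right]
    exact mul_le_mul_of_nonneg_left (one_sub_mul_norm_sq_le_real_inner hG) hη0.le
  have hsecond : ‖η • G‖ ^ 2 * A ≤ η * (A / 2) * N ^ 2 := by
    have hG2 : ‖G‖ ^ 2 ≤ (1 + w) ^ 2 * N ^ 2 := by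
      rw [← mul_pow]; exact pow_le_pow_left₀ (norm_nonneg G) hGN 2
    have hA0 : 0 ≤ A := (norm_nonneg _).trans hNA
    rw [hηG, mul_pow]
    have : η * (1 + w) ^ 2 ≤ 1 / 2 := by nlinarith
    calc η ^ 2 * ‖G‖ ^ 2 * A ≤ η ^ 2 * ((1 + w) ^ 2 * N ^ 2) * A := by gcongr
      _ = (η * (1 + w) ^ 2) * (η * N ^ 2 * A) := by ring
      _ ≤ 1 / 2 * (η * N ^ 2 * A) := by gcongr
      _ = η * (A / 2) * N ^ 2 := by ring
  have := weightedRisk_add_le hz hp (θ := θ) hsmall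
  nlinarith

lemma log_weightedRisk_step_le [Nonempty ι] (hz : ∀ i, ‖z i‖ ≤ 1) (hp : ∀ i, 0 < p i)
    (hp1 : ∑ i, p i = 1) {u : E} (hu : ‖u‖ ≤ 1) {γ : ℝ} (hγ : 0 ≤ γ) (hγu : ∀ i, γ ≤ ⟪u, z i⟫)
    {w η : ℝ} (hw0 : 0 ≤ w) (hw : w ≤ 1 / 5) (hη0 : 0 < η) (hη : η ≤ 1 / 4)
    (hσ : ∀ i, sigmoid (-⟪θ, z i⟫) ≤ w) {G : E}
    (hG : ‖G - riskNegGrad z p θ‖ ≤ w * ‖riskNegGrad z p θ‖) :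
    (1 - 5 * w) * γ * (‖θ + η • G‖ - ‖θ‖) ≤
      log (weightedRisk z p θ) - log (weightedRisk z p (θ + η • G)) := by
  have hp0 : ∀ i, 0 ≤ p i := fun i => (hp i).le
  set N := ‖riskNegGrad z p θ‖
  set A := gradMass z p θ
  set L := weightedRisk z p θ
  set L' := weightedRisk z p (θ + η • G)
  have hL : 0 < L := weightedRisk_pos hp
  have hL' : 0 < L' := weightedRisk_pos hp
  have hAw : A ≤ w := by simpa [hp1] using gradMass_le hp0 hσ
  have hLA : (1 - w) * L ≤ A := mul_weightedRisk_le_gradMass hp0 hσ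
  have hγA : γ * A ≤ N := mul_gradMass_le_norm_riskNegGrad hp0 hu hγu
  have hdesc : L' ≤ L - η * (1 - 2 * w) * N ^ 2 := by
    have hstep : L' ≤ L - η * (1 - w - A / 2) * N ^ 2 :=
      weightedRisk_step_le hz hp0 (by linarith) hw0 (by linarith) hη0 hη hG
    have := mul_le_mul_of_nonneg_right (show 1 - 2 * w ≤ 1 - w - A / 2 by linarith)
      (mul_nonneg hη0.le (sq_nonneg N))
    nlinarith
  have hlog : η * (1 - 2 * w) * N ^ 2 / L ≤ log L - log L' := by
    have := one_sub_inv_le_log_of_pos (div_pos hL hL')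
    rw [log_div hL.ne' hL'.ne', inv_div] at this
    refine le_trans ?_ this
    rw [div_le_iff₀ hL, sub_mul, div_mul_cancel₀ _ hL.ne']
    linarith
  have hρ : ‖θ + η • G‖ - ‖θ‖ ≤ η * ((1 + w) * N) := by
    have hGN : ‖G‖ ≤ (1 + w) * N := by
      linarith [norm_le_norm_add_norm_sub' G (riskNegGrad z p θ)]
    have := norm_add_le θ (η • G)
    rw [norm_smul, Real.norm_of_nonneg hη0.le] at this
    nlinarith
  have hγL : (1 - w) * γ ≤ N / L := by
    rw [le_div_iff₀ hL]; nlinarith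
  calc (1 - 5 * w) * γ * (‖θ + η • G‖ - ‖θ‖) ≤ (1 - 5 * w) * γ * (η * ((1 + w) * N)) :=
        mul_le_mul_of_nonneg_left hρ (mul_nonneg (by linarith) hγ)
    _ ≤ η * (1 - 2 * w) * ((1 - w) * γ) * N := by
        have : (1 - 5 * w) * (1 + w) ≤ (1 - 2 * w) * (1 - w) := by nlinarith
        have := mul_le_mul_of_nonneg_right this
          (mul_nonneg (mul_nonneg hγ hη0.le) (norm_nonneg (riskNegGrad z p θ)))
        nlinarith
    _ ≤ η * (1 - 2 * w) * (N / L) * N := by gcongr; exact mul_nonneg hη0.le (by linarith)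
    _ = η * (1 - 2 * w) * N ^ 2 / L := by ring
    _ ≤ log L - log L' := hlog

end Risk

section Margin

variable {E : Type*} [NormedAddCommGroup E] [InnerProductSpace ℝ E] {ι : Type*}
  {z : ι → E} {u : E}

noncomputable def margin (z : ι → E) (v : E) : ℝ := ⨅ i, ⟪v, z i⟫

lemma margin_le_inner [Finite ι] (v : E) (i : ι) : margin z v ≤ ⟪v, z i⟫ :=
  ciInf_le (Set.finite_range _).bddBelow i

lemma le_margin [Nonempty ι] {v : E} {c : ℝ} (h : ∀ i, c ≤ ⟪v, z i⟫) : c ≤ margin z v :=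
  le_ciInf h

lemma margin_smul {c : ℝ} (hc : 0 ≤ c) (v : E) : margin z (c • v) = c * margin z v := by
  simp only [margin, real_inner_smul_left, Real.mul_iInf_of_nonneg hc]

lemma margin_le_mul_norm (hmax : ∀ v : E, ‖v‖ = 1 → margin z v ≤ margin z u) (v : E) :
    margin z v ≤ margin z u * ‖v‖ := by
  rcases eq_or_ne v 0 with rfl | hv
  · simp [margin]
  · have hn := norm_pos_iff.2 hv
    have := hmax (‖v‖⁻¹ • v) (by rw [norm_smul, norm_inv, norm_norm, inv_mul_cancel₀ hn.ne'])
    rwa [margin_smul (inv_nonneg.2 hn.le), inv_mul_le_iff₀ hn, mul_comm] at this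

lemma LinearIndependent.exists_inner_eq_one [FiniteDimensional ℝ E] (h : LinearIndependent ℝ z) :
    ∃ θ : E, ∀ i, ⟪θ, z i⟫ = 1 := by
  obtain ⟨f, hf⟩ := Module.exists_dual_forall_apply_eq_one (h.linearIndepOn Set.univ)
  refine ⟨(InnerProductSpace.toDual ℝ E).symm (LinearMap.toContinuousLinearMap f), fun i => ?_⟩
  rw [InnerProductSpace.toDual_symm_apply]
  exact hf i (Set.mem_univ i)

lemma margin_pos_of_linearIndependent [FiniteDimensional ℝ E] [Nonempty ι]
    (hmax : ∀ v : E, ‖v‖ = 1 → margin z v ≤ margin z u) (h : LinearIndependent ℝ z) :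
    0 < margin z u := by
  obtain ⟨θ, hθ⟩ := h.exists_inner_eq_one
  have hθ1 : 1 ≤ margin z u * ‖θ‖ :=
    (le_margin fun i => (hθ i).ge).trans (margin_le_mul_norm hmax θ)
  exact pos_of_mul_pos_left (one_pos.trans_le hθ1) (norm_nonneg θ)

lemma norm_sub_sq_mul_margin_le [Finite ι] [Nonempty ι] (hu : ‖u‖ = 1)
    (hmax : ∀ v : E, ‖v‖ = 1 → margin z v ≤ margin z u) (hγ : 0 < margin z u) {v : E}
    (hv : ‖v‖ = 1) {δ : ℝ} (h : ∀ i, margin z u - δ ≤ ⟪v, z i⟫) :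
    ‖v - u‖ ^ 2 * margin z u ≤ 4 * δ := by
  set γ := margin z u
  have hδ : 0 ≤ δ := by linarith [le_margin h, hmax v hv]
  have hsum : 2 * γ - δ ≤ γ * ‖u + v‖ := by
    refine le_trans (le_margin fun i => ?_) (margin_le_mul_norm hmax (u + v))
    rw [inner_add_left]
    linarith [margin_le_inner (z := z) u i, h i]
  have hpar : ‖u + v‖ ^ 2 + ‖v - u‖ ^ 2 = 4 := by
    have := parallelogram_law_with_norm ℝ u v
    rw [norm_sub_rev u v, hu, hv] at this
    linear_combination this
  nlinarith [norm_nonneg (u + v)]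

lemma tendsto_of_eventually_margin_ge [Finite ι] [Nonempty ι] (hu : ‖u‖ = 1)
    (hmax : ∀ v : E, ‖v‖ = 1 → margin z v ≤ margin z u) (hγ : 0 < margin z u) {α : Type*}
    {l : Filter α} {v : α → E} (hv : ∀ᶠ a in l, ‖v a‖ = 1)
    (h : ∀ δ > 0, ∀ᶠ a in l, ∀ i, margin z u - δ ≤ ⟪v a, z i⟫) : Tendsto v l (𝓝 u) := by
  refine Metric.tendsto_nhds.2 fun ε hε => ?_
  filter_upwards [hv, h (ε ^ 2 * margin z u / 8) (by positivity)] with a hva ha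
  have := norm_sub_sq_mul_margin_le hu hmax hγ hva ha
  rw [dist_eq_norm, ← sq_lt_sq₀ (norm_nonneg _) hε.le]
  nlinarith [sq_pos_of_pos hε]

end Margin

section Trajectory

variable {E : Type*} [NormedAddCommGroup E] [InnerProductSpace ℝ E] {ι : Type*} [Fintype ι]
  {z : ι → E} {p : ι → ℝ} {q : ℕ → ι → ℝ} {u : E} {γ η : ℝ} {θ : ℕ → E}

lemma eventually_norm_riskNegGrad_sub_le (hz : ∀ i, ‖z i‖ ≤ 1) (hp : ∀ i, 0 < p i)
    (hq : ∀ i, Tendsto (fun t => q t i) atTop (𝓝 (p i))) (hu : ‖u‖ ≤ 1) (hγ : 0 < γ)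
    (hγu : ∀ i, γ ≤ ⟪u, z i⟫) {w : ℝ} (hw : 0 < w) :
    ∀ᶠ t in atTop, ∀ θ : E,
      ‖riskNegGrad z (q t) θ - riskNegGrad z p θ‖ ≤ w * ‖riskNegGrad z p θ‖ := by
  have hclose : ∀ᶠ t in atTop, ∀ i, |q t i - p i| ≤ w * γ * p i :=
    eventually_all.2 fun i =>
      ((hq i).eventually (Metric.closedBall_mem_nhds _ (mul_pos (mul_pos hw hγ) (hp i)))).mono
      fun t ht => by rwa [Real.dist_eq] at ht
  filter_upwards [hclose] with t ht θ
  calc ‖riskNegGrad z (q t) θ - riskNegGrad z p θ‖ ≤ w * γ * gradMass z p θ :=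
        norm_riskNegGrad_sub_le hz ht
    _ = w * (γ * gradMass z p θ) := mul_assoc _ _ _
    _ ≤ w * ‖riskNegGrad z p θ‖ := mul_le_mul_of_nonneg_left
        (mul_gradMass_le_norm_riskNegGrad (fun i => (hp i).le) hu hγu) hw.le

variable (hz : ∀ i, ‖z i‖ ≤ 1) (hp : ∀ i, 0 < p i) (hp1 : ∑ i, p i = 1)
  (hq : ∀ i, Tendsto (fun t => q t i) atTop (𝓝 (p i)))
  (hu : ‖u‖ ≤ 1) (hγ : 0 < γ) (hγu : ∀ i, γ ≤ ⟪u, z i⟫)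
  (hη0 : 0 < η) (hη : η ≤ 1 / 4) (hθ : ∀ t, θ (t + 1) = θ t + η • riskNegGrad z (q t) (θ t))
include hz hp hp1 hq hu hγ hγu hη0 hη hθ

lemma eventually_mul_norm_sq_le_weightedRisk_sub :
    ∀ᶠ t in atTop, η / 4 * ‖riskNegGrad z p (θ t)‖ ^ 2 ≤
      weightedRisk z p (θ t) - weightedRisk z p (θ (t + 1)) := by
  have hp0 : ∀ i, 0 ≤ p i := fun i => (hp i).le
  filter_upwards [eventually_norm_riskNegGrad_sub_le hz hp hq hu hγ hγu (w := 1 / 4) (by norm_num)]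
    with t ht
  have hA : gradMass z p (θ t) ≤ 1 := by
    simpa [hp1] using gradMass_le hp0 (θ := θ t) fun i => (sigmoid_lt_one _).le
  have hstep := weightedRisk_step_le hz hp0 hA (by norm_num) le_rfl hη0 hη (ht (θ t))
  have := mul_le_mul_of_nonneg_right (show 1 / 4 ≤ 1 - 1 / 4 - gradMass z p (θ t) / 2 by linarith)
    (mul_nonneg hη0.le (sq_nonneg ‖riskNegGrad z p (θ t)‖))
  rw [hθ t]
  nlinarith

lemma tendsto_sigmoid_neg_inner [Nonempty ι] (i : ι) :
    Tendsto (fun t => sigmoid (-⟪θ t, z i⟫)) atTop (𝓝 0) := by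
  have hsq : Tendsto (fun t => ‖riskNegGrad z p (θ t)‖ ^ 2) atTop (𝓝 0) :=
    tendsto_zero_of_eventually_mul_le_sub (by positivity) (fun t => (weightedRisk_pos hp).le)
      (fun t => sq_nonneg _)
      (eventually_mul_norm_sq_le_weightedRisk_sub hz hp hp1 hq hu hγ hγu hη0 hη hθ)
  have hnorm : Tendsto (fun t => ‖riskNegGrad z p (θ t)‖) atTop (𝓝 0) := by
    simpa [Real.sqrt_sq (norm_nonneg _)] using hsq.sqrt
  refine squeeze_zero (fun t => (sigmoid_pos _).le) (fun t => ?_)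
    (by simpa using hnorm.div_const (γ * p i))
  have hi : p i * sigmoid (-⟪θ t, z i⟫) ≤ gradMass z p (θ t) :=
    Finset.single_le_sum (f := fun j => p j * sigmoid (-⟪θ t, z j⟫))
      (fun j _ => mul_nonneg (hp j).le (sigmoid_pos _).le) (Finset.mem_univ i)
  have hA := mul_gradMass_le_norm_riskNegGrad (fun j => (hp j).le) hu hγu (θ := θ t)
  rw [le_div_iff₀ (mul_pos hγ (hp i))]
  nlinarith

lemma tendsto_norm_atTop [Nonempty ι] : Tendsto (fun t => ‖θ t‖) atTop atTop := by
  let i := Classical.arbitrary ι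
  refine tendsto_atTop_mono (fun t => ?_) (tendsto_atTop_of_tendsto_sigmoid_neg
    (tendsto_sigmoid_neg_inner hz hp hp1 hq hu hγ hγu hη0 hη hθ i))
  exact (real_inner_le_norm _ _).trans (mul_le_of_le_one_right (norm_nonneg _) (hz i))

lemma eventually_log_weightedRisk_step_le [Nonempty ι] {w : ℝ} (hw0 : 0 < w) (hw : w ≤ 1 / 5) :
    ∀ᶠ t in atTop, (1 - 5 * w) * γ * (‖θ (t + 1)‖ - ‖θ t‖) ≤
      log (weightedRisk z p (θ t)) - log (weightedRisk z p (θ (t + 1))) := by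
  have hσ : ∀ᶠ t in atTop, ∀ i, sigmoid (-⟪θ t, z i⟫) ≤ w := eventually_all.2 fun i =>
    (tendsto_sigmoid_neg_inner hz hp hp1 hq hu hγ hγu hη0 hη hθ i).eventually (ge_mem_nhds hw0)
  filter_upwards [eventually_norm_riskNegGrad_sub_le hz hp hq hu hγ hγu hw0, hσ] with t hG hσt
  rw [hθ t]
  exact log_weightedRisk_step_le hz hp hp1 hu hγ.le hγu hw0.le hw hη0 hη hσt (hG _)

lemma eventually_log_sub_log_weightedRisk_le_inner [Nonempty ι] :
    ∀ᶠ t in atTop, ∀ i, log (p i / 2) - log (weightedRisk z p (θ t)) ≤ ⟪θ t, z i⟫ := by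
  refine eventually_all.2 fun i => ?_
  filter_upwards [(tendsto_sigmoid_neg_inner hz hp hp1 hq hu hγ hγu hη0 hη hθ i).eventually_lt_const
    (sigmoid_pos 0)] with t ht
  have hZ : 0 ≤ ⟪θ t, z i⟫ := by linarith [sigmoid_lt_iff.1 ht]
  have hL : p i / 2 * exp (-⟪θ t, z i⟫) ≤ weightedRisk z p (θ t) :=
    calc p i / 2 * exp (-⟪θ t, z i⟫) ≤ p i * logisticLoss ⟪θ t, z i⟫ := by
          nlinarith [exp_neg_le_two_mul_logisticLoss hZ, hp i]
      _ ≤ weightedRisk z p (θ t) :=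
          Finset.single_le_sum (f := fun j => p j * logisticLoss ⟪θ t, z j⟫)
            (fun j _ => (mul_pos (hp j) (logisticLoss_pos _)).le) (Finset.mem_univ i)
  have := log_le_log (by have := hp i; positivity) hL
  rw [log_mul (by have := hp i; positivity) (exp_pos _).ne', log_exp] at this
  linarith

lemma eventually_sub_le_inner_normalize [Nonempty ι] {δ : ℝ} (hδ : 0 < δ) :
    ∀ᶠ t in atTop, ∀ i, γ - δ ≤ ⟪‖θ t‖⁻¹ • θ t, z i⟫ := by
  set w := min (1 / 5) (δ / (10 * γ))
  have hw0 : 0 < w := lt_min (by norm_num) (by positivity)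
  have hwγ : 5 * w * γ ≤ δ / 2 := by
    have := min_le_right (1 / 5) (δ / (10 * γ))
    rw [le_div_iff₀ (by positivity)] at this
    linarith
  have hstep := eventually_log_weightedRisk_step_le hz hp hp1 hq hu hγ hγu hη0 hη hθ hw0
    (min_le_left _ _)
  obtain ⟨C, hC⟩ := exists_eventually_mul_sub_le (ρ := fun t => ‖θ t‖)
    (Φ := fun t => -log (weightedRisk z p (θ t))) (c := (1 - 5 * w) * γ)
    (hstep.mono fun t ht => by linarith)
  have hnorm := tendsto_norm_atTop hz hp hp1 hq hu hγ hγu hη0 hη hθ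
  have hρ : ∀ᶠ t in atTop, ∀ i, C - log (p i / 2) ≤ δ / 2 * ‖θ t‖ := eventually_all.2 fun i =>
    (hnorm.const_mul_atTop (half_pos hδ)).eventually_ge_atTop _
  filter_upwards [hC, eventually_log_sub_log_weightedRisk_le_inner hz hp hp1 hq hu hγ hγu hη0 hη hθ,
    hρ, hnorm.eventually_gt_atTop 0] with t hCt hZt hρt hpos i
  rw [real_inner_smul_left, ← div_eq_inv_mul, le_div_iff₀ hpos]
  nlinarith [hZt i, hρt i, mul_le_mul_of_nonneg_right hwγ hpos.le]

end Trajectory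

theorem stmt_12_general {d n : ℕ} (hn : 0 < n)
    (x : Fin n → EuclideanSpace ℝ (Fin d)) (hx : ∀ i, ‖x i‖ ≤ 1)
    (y : Fin n → ℝ) (hy : ∀ i, y i = 1 ∨ y i = -1)
    (hli : LinearIndependent ℝ x)
    (q : ℕ → Fin n → ℝ)
    (hq1 : ∀ t, ∑ i, q t i = 1)
    (qlim : Fin n → ℝ)
    (hqlim : ∀ i, Tendsto (fun t => q t i) atTop (nhds (qlim i)))
    (hqpos : ∀ i, 0 < qlim i)
    (u : EuclideanSpace ℝ (Fin d)) (hu : ‖u‖ = 1)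
    (humax : ∀ v : EuclideanSpace ℝ (Fin d), ‖v‖ = 1 →
      (⨅ i, y i * ⟪v, x i⟫) ≤ ⨅ i, y i * ⟪u, x i⟫) :
    ∃ η₀ > (0 : ℝ), ∀ η : ℝ, 0 < η → η ≤ η₀ →
      ∀ θ : ℕ → EuclideanSpace ℝ (Fin d),
        (∀ t, θ (t + 1) = θ t
          + η • ∑ i, (q t i * y i / (1 + Real.exp (y i * ⟪θ t, x i⟫))) • x i) →
        Tendsto (fun t => ‖θ t‖⁻¹ • θ t) atTop (nhds u) := by
  have : Nonempty (Fin n) := ⟨⟨0, hn⟩⟩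
  set z : Fin n → EuclideanSpace ℝ (Fin d) := fun i => y i • x i
  have hyabs : ∀ i, |y i| = 1 := fun i => by rcases hy i with h | h <;> simp [h]
  have hz : ∀ i, ‖z i‖ ≤ 1 := fun i => by simpa [z, norm_smul, hyabs] using hx i
  have hmax : ∀ v, ‖v‖ = 1 → margin z v ≤ margin z u := by
    simpa only [margin, z, real_inner_smul_right] using humax
  have hγ : 0 < margin z u := margin_pos_of_linearIndependent hmax
    (hli.units_smul fun i => Units.mk0 (y i) (by rcases hy i with h | h <;> simp [h]))
  have hp1 : ∑ i, qlim i = 1 :=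
    tendsto_nhds_unique (tendsto_finsetSum _ fun i _ => hqlim i) (by simp [hq1])
  refine ⟨1 / 4, by norm_num, fun η hη0 hη θ hθ => ?_⟩
  have hstep : ∀ t, θ (t + 1) = θ t + η • riskNegGrad z (q t) (θ t) := fun t => by
    rw [hθ t, riskNegGrad]
    congr 2
    refine Finset.sum_congr rfl fun i _ => ?_
    rw [smul_smul, real_inner_smul_right, sigmoid_def, neg_neg]
    congr 1
    ring
  refine tendsto_of_eventually_margin_ge hu hmax hγ ?_ fun δ hδ =>
    eventually_sub_le_inner_normalize hz hqpos hp1 hqlim hu.le hγ (margin_le_inner u) hη0 hη hstep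
      hδ
  filter_upwards [(tendsto_norm_atTop hz hqpos hp1 hqlim hu.le hγ (margin_le_inner u) hη0 hη
    hstep).eventually_gt_atTop 0] with t ht
  rw [norm_smul, norm_inv, norm_norm, inv_mul_cancel₀ ht.ne']

/-- For the logistic loss, linearly independent data, and GRW
weights satisfying Assumption 1, there exists `η₀ > 0` such that for every
learning rate `0 < η ≤ η₀`, the normalized GRW iterates `θ^{(t)}/‖θ^{(t)}‖`
converge to the (unique) max-margin classifier `u` — independently of the
weights. -/
theorem stmt_12 {d n : ℕ} (hn : 0 < n)
    (x : Fin n → EuclideanSpace ℝ (Fin d)) (hx : ∀ i, ‖x i‖ ≤ 1)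
    (y : Fin n → ℝ) (hy : ∀ i, y i = 1 ∨ y i = -1)
    (hli : LinearIndependent ℝ x)
    (q : ℕ → Fin n → ℝ)
    (hq0 : ∀ t i, 0 ≤ q t i)
    (hq1 : ∀ t, ∑ i, q t i = 1)
    (qlim : Fin n → ℝ)
    (hqlim : ∀ i, Tendsto (fun t => q t i) atTop (nhds (qlim i)))
    (hqpos : ∀ i, 0 < qlim i)
    (u : EuclideanSpace ℝ (Fin d)) (hu : ‖u‖ = 1)
    (humax : ∀ v : EuclideanSpace ℝ (Fin d), ‖v‖ = 1 →
      (⨅ i, y i * ⟪v, x i⟫) ≤ ⨅ i, y i * ⟪u, x i⟫) :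
    ∃ η₀ > (0 : ℝ), ∀ η : ℝ, 0 < η → η ≤ η₀ →
      ∀ θ : ℕ → EuclideanSpace ℝ (Fin d),
        (∀ t, θ (t + 1) = θ t
          + η • ∑ i, (q t i * y i / (1 + Real.exp (y i * ⟪θ t, x i⟫))) • x i) →
        Tendsto (fun t => ‖θ t‖⁻¹ • θ t) atTop (nhds u) :=
  stmt_12_general hn x hx y hy hli q hq1 qlim hqlim hqpos u hu humax
end

section
/- Let H ∈ ℝ^{n×n} be symmetric positive semi-definite with all eigenvalues in [λ_min, λ_max], where λ_min > 0, and let Q = diag(q₁,…,qₙ) with q* ≤ qᵢ ≤ 1 for all i, where q* > 0. Write √Q = diag(√q₁,…,√qₙ). Then for every 0 < η ≤ 1/λ_max, the symmetric matrix I − η√Q H √Q is positive semi-definite and its spectral (operator) norm satisfies ‖I − η√Q H √Q‖₂ ≤ 1 − η q* λ_min. -/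
open Matrix
open scoped MatrixOrder ComplexOrder

/-!
In the Loewner order the eigenvalue bounds read `λ_min • 1 ≤ H ≤ λ_max • 1`. Conjugating by
`√Q ≥ 0` and using `q* • 1 ≤ Q ≤ 1` gives `q* λ_min • 1 ≤ √Q H √Q ≤ λ_max • 1`, hence
`0 ≤ 1 - η √Q H √Q ≤ (1 - η q* λ_min) • 1` as soon as `η λ_max ≤ 1`. A positive operator
`T ≤ c • 1` has norm at most `c`, because the norm of a symmetric operator is the supremum of its
Rayleigh quotient.
-/

lemma ContinuousLinearMap.norm_le_of_nonneg_of_le_smul_one {𝕜 E : Type*} [RCLike 𝕜]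
    [NormedAddCommGroup E] [InnerProductSpace 𝕜 E] {T : E →L[𝕜] E} {c : ℝ} (hc : 0 ≤ c)
    (hT₀ : 0 ≤ T) (hTc : T ≤ (c : 𝕜) • 1) : ‖T‖ ≤ c := by
  rw [nonneg_iff_isPositive] at hT₀
  rw [norm_eq_iSup_rayleighQuotient T hT₀.isSymmetric]
  refine ciSup_le fun x => ?_
  have h₀ : 0 ≤ T.reApplyInnerSelf x := hT₀.2 x
  have h₁ : T.reApplyInnerSelf x ≤ c * ‖x‖ ^ 2 := by
    simpa [reApplyInnerSelf_apply, inner_sub_left, inner_smul_left] using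
      (le_def _ _ |>.mp hTc).2 x
  rw [rayleighQuotient, abs_div, abs_of_nonneg h₀, abs_sq]
  exact div_le_of_le_mul₀ (sq_nonneg _) hc h₁

section OrderedAlgebra

variable {A : Type*} [Ring A] [PartialOrder A] [IsOrderedAddMonoid A] [Module ℝ A]
  [PosSMulMono ℝ A]

lemma zero_le_one_sub_smul_of_le_smul_one [ZeroLEOneClass A] {M : A} {b η : ℝ} (hη : 0 ≤ η)
    (hηb : η * b ≤ 1) (hM : M ≤ b • 1) : 0 ≤ 1 - η • M :=
  calc (0 : A) ≤ (1 - η * b) • 1 := smul_nonneg (sub_nonneg.mpr hηb) zero_le_one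
    _ = 1 - η • (b • 1) := by module
    _ ≤ 1 - η • M := sub_le_sub_left (smul_le_smul_of_nonneg_left hM hη) 1

lemma one_sub_smul_le_of_smul_one_le {M : A} {a η : ℝ} (hη : 0 ≤ η) (hM : a • 1 ≤ M) :
    1 - η • M ≤ (1 - η * a) • 1 :=
  calc 1 - η • M ≤ 1 - η • (a • 1) := sub_le_sub_left (smul_le_smul_of_nonneg_left hM hη) 1
    _ = (1 - η * a) • 1 := by module

end OrderedAlgebra

namespace Matrix

variable {𝕜 n : Type*} [RCLike 𝕜] [DecidableEq n]

lemma diagonal_le_diagonal {d e : n → 𝕜} (h : ∀ i, d i ≤ e i) : diagonal d ≤ diagonal e := by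
  rw [le_iff, diagonal_sub, posSemidef_diagonal_iff]
  exact fun i => sub_nonneg.mpr (h i)

variable [Fintype n]

instance : PosSMulMono ℝ (Matrix n n 𝕜) :=
  ⟨fun _ hc _ _ hAB => by rw [le_iff, ← smul_sub]; exact hAB.smul hc⟩

lemma IsHermitian.smul_one_le_of_le_eigenvalues {A : Matrix n n 𝕜} (hA : A.IsHermitian) {a : ℝ}
    (ha : ∀ i, a ≤ hA.eigenvalues i) : a • (1 : Matrix n n 𝕜) ≤ A := by
  rw [← Algebra.algebraMap_eq_smul_one, algebraMap_le_iff_le_spectrum hA.isSelfAdjoint,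
    hA.spectrum_real_eq_range_eigenvalues]
  rintro _ ⟨i, rfl⟩
  exact ha i

lemma IsHermitian.le_smul_one_of_eigenvalues_le {A : Matrix n n 𝕜} (hA : A.IsHermitian) {b : ℝ}
    (hb : ∀ i, hA.eigenvalues i ≤ b) : A ≤ b • (1 : Matrix n n 𝕜) := by
  rw [← Algebra.algebraMap_eq_smul_one, le_algebraMap_iff_spectrum_le hA.isSelfAdjoint,
    hA.spectrum_real_eq_range_eigenvalues]
  rintro _ ⟨i, rfl⟩
  exact hb i

lemma PosSemidef.isPositive_toEuclideanCLM {A : Matrix n n 𝕜} (hA : A.PosSemidef) :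
    (toEuclideanCLM (n := n) (𝕜 := 𝕜) A).IsPositive := by
  rw [← ContinuousLinearMap.isPositive_toLinearMap_iff, coe_toEuclideanCLM_eq_toEuclideanLin]
  exact isPositive_toEuclideanLin_iff.mpr hA

lemma norm_toEuclideanCLM_le_of_nonneg_of_le_smul_one {A : Matrix n n 𝕜} {c : ℝ} (hc : 0 ≤ c)
    (hA₀ : 0 ≤ A) (hAc : A ≤ c • 1) : ‖toEuclideanCLM (n := n) (𝕜 := 𝕜) A‖ ≤ c := by
  refine ContinuousLinearMap.norm_le_of_nonneg_of_le_smul_one hc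
    ((ContinuousLinearMap.nonneg_iff_isPositive _).mpr hA₀.posSemidef.isPositive_toEuclideanCLM) ?_
  have := (le_iff.mp hAc).isPositive_toEuclideanCLM
  rwa [map_sub, RCLike.real_smul_eq_coe_smul (K := 𝕜), map_smul, map_one] at this

lemma diagonal_sqrt_mul_smul_one_mul_diagonal_sqrt {d : n → ℝ} (hd : ∀ i, 0 ≤ d i) (a : ℝ) :
    diagonal (fun i => √(d i)) * (a • 1) * diagonal (fun i => √(d i)) = a • diagonal d := by
  rw [mul_smul_comm, mul_one, smul_mul_assoc, diagonal_mul_diagonal]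
  simp_rw [Real.mul_self_sqrt (hd _)]

lemma smul_one_le_diagonal_sqrt_mul_mul {H : Matrix n n ℝ} {a q₀ : ℝ} {d : n → ℝ}
    (ha : 0 ≤ a) (hq₀ : 0 ≤ q₀) (hd : ∀ i, q₀ ≤ d i) (hH : a • 1 ≤ H) :
    (q₀ * a) • 1 ≤ diagonal (fun i => √(d i)) * H * diagonal (fun i => √(d i)) :=
  calc (q₀ * a) • (1 : Matrix n n ℝ) = a • diagonal fun _ => q₀ := by
        rw [mul_comm, ← smul_smul, smul_one_eq_diagonal]
    _ ≤ a • diagonal d := smul_le_smul_of_nonneg_left (diagonal_le_diagonal hd) ha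
    _ = _ := (diagonal_sqrt_mul_smul_one_mul_diagonal_sqrt (fun i => hq₀.trans (hd i)) a).symm
    _ ≤ _ := conjugate_le_conjugate_of_nonneg hH
        (PosSemidef.diagonal fun i => Real.sqrt_nonneg (d i)).nonneg

lemma diagonal_sqrt_mul_mul_le_smul_one {H : Matrix n n ℝ} {b : ℝ} {d : n → ℝ}
    (hb : 0 ≤ b) (hd : ∀ i, 0 ≤ d i ∧ d i ≤ 1) (hH : H ≤ b • 1) :
    diagonal (fun i => √(d i)) * H * diagonal (fun i => √(d i)) ≤ b • 1 :=
  calc _ ≤ diagonal (fun i => √(d i)) * (b • 1) * diagonal (fun i => √(d i)) :=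
        conjugate_le_conjugate_of_nonneg hH
          (PosSemidef.diagonal fun i => Real.sqrt_nonneg (d i)).nonneg
    _ = b • diagonal d := diagonal_sqrt_mul_smul_one_mul_diagonal_sqrt (fun i => (hd i).1) b
    _ ≤ b • diagonal fun _ => 1 :=
        smul_le_smul_of_nonneg_left (diagonal_le_diagonal fun i => (hd i).2) hb
    _ = b • 1 := by rw [diagonal_one]

end Matrix

theorem stmt_14_general {n : ℕ} (hn : 0 < n)
    (H : Matrix (Fin n) (Fin n) ℝ) (hH : H.IsHermitian)
    (lammin lammax : ℝ) (hlammin : 0 < lammin)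
    (heval : ∀ i, hH.eigenvalues i ∈ Set.Icc lammin lammax)
    (q : Fin n → ℝ) (qstar : ℝ) (hqstar : 0 < qstar)
    (hq : ∀ i, qstar ≤ q i ∧ q i ≤ 1)
    (η : ℝ) (hη₁ : 0 < η) (hη₂ : η ≤ 1 / lammax) :
    ((1 : Matrix (Fin n) (Fin n) ℝ)
        - η • (Matrix.diagonal (fun i => Real.sqrt (q i)) * H
            * Matrix.diagonal (fun i => Real.sqrt (q i)))).PosSemidef ∧
    ‖Matrix.toEuclideanCLM (𝕜 := ℝ)
        ((1 : Matrix (Fin n) (Fin n) ℝ)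
          - η • (Matrix.diagonal (fun i => Real.sqrt (q i)) * H
              * Matrix.diagonal (fun i => Real.sqrt (q i))))‖
      ≤ 1 - η * qstar * lammin := by
  obtain ⟨hlo, hhi⟩ := heval ⟨0, hn⟩
  obtain ⟨hqlo, hqhi⟩ := hq ⟨0, hn⟩
  have hlammax : 0 < lammax := hlammin.trans_le (hlo.trans hhi)
  have hηlammax : η * lammax ≤ 1 := by rwa [le_div_iff₀ hlammax] at hη₂
  have hc : 0 ≤ 1 - η * qstar * lammin := by
    have : qstar * lammin ≤ 1 * lammax :=
      mul_le_mul (hqlo.trans hqhi) (hlo.trans hhi) hlammin.le zero_le_one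
    nlinarith
  have hM_lo := smul_one_le_diagonal_sqrt_mul_mul hlammin.le hqstar.le (fun i => (hq i).1)
    (hH.smul_one_le_of_le_eigenvalues fun i => (heval i).1)
  have hM_hi := diagonal_sqrt_mul_mul_le_smul_one hlammax.le
    (fun i => ⟨hqstar.le.trans (hq i).1, (hq i).2⟩)
    (hH.le_smul_one_of_eigenvalues_le fun i => (heval i).2)
  have hT₀ := zero_le_one_sub_smul_of_le_smul_one hη₁.le hηlammax hM_hi
  have hTc := one_sub_smul_le_of_smul_one_le hη₁.le hM_lo
  rw [← mul_assoc] at hTc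
  exact ⟨hT₀.posSemidef, norm_toEuclideanCLM_le_of_nonneg_of_le_smul_one hc hT₀ hTc⟩

/-- Let `H` be real symmetric positive semi-definite with all
eigenvalues in `[λ_min, λ_max]`, `λ_min > 0`, and `Q = diag(q₁,…,qₙ)` with
`q* ≤ qᵢ ≤ 1`, `q* > 0`. Then for `0 < η ≤ 1/λ_max`, the symmetric matrix
`I − η√Q H √Q` is positive semi-definite and its spectral norm is at most
`1 − η q* λ_min`. -/
theorem stmt_14 {n : ℕ} (hn : 0 < n)
    (H : Matrix (Fin n) (Fin n) ℝ) (hH : H.IsHermitian) (hPSD : H.PosSemidef)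
    (lammin lammax : ℝ) (hlammin : 0 < lammin)
    (heval : ∀ i, hH.eigenvalues i ∈ Set.Icc lammin lammax)
    (q : Fin n → ℝ) (qstar : ℝ) (hqstar : 0 < qstar)
    (hq : ∀ i, qstar ≤ q i ∧ q i ≤ 1)
    (η : ℝ) (hη₁ : 0 < η) (hη₂ : η ≤ 1 / lammax) :
    ((1 : Matrix (Fin n) (Fin n) ℝ)
        - η • (Matrix.diagonal (fun i => Real.sqrt (q i)) * H
            * Matrix.diagonal (fun i => Real.sqrt (q i)))).PosSemidef ∧
    ‖Matrix.toEuclideanCLM (𝕜 := ℝ)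
        ((1 : Matrix (Fin n) (Fin n) ℝ)
          - η • (Matrix.diagonal (fun i => Real.sqrt (q i)) * H
              * Matrix.diagonal (fun i => Real.sqrt (q i))))‖
      ≤ 1 - η * qstar * lammin :=
  stmt_14_general hn H hH lammin lammax hlammin heval q qstar hqstar hq η hη₁ hη₂
end

section
/- Let v₁,…,vₙ ∈ ℝ^p be linearly independent, c₁,…,cₙ ∈ ℝ, y₁,…,yₙ ∈ ℝ, and θ⁰ ∈ ℝ^p. Consider the GRW iteration for the affine model whose prediction on sample i at parameter θ is cᵢ + ⟨θ − θ⁰, vᵢ⟩, trained with the squared loss: θ^{(0)} = θ⁰ and θ^{(t+1)} = θ^{(t)} − η Σᵢ qᵢ^{(t)} vᵢ (cᵢ + ⟨θ^{(t)} − θ⁰, vᵢ⟩ − yᵢ), with weights qᵢ^{(t)} ≥ 0 summing to 1 and satisfying Assumption 1. Then there exists η₀ > 0 such that for every 0 < η ≤ η₀, θ^{(t)} converges to the unique vector θ* with θ* − θ⁰ ∈ span{v₁,…,vₙ} and cᵢ + ⟨θ* − θ⁰, vᵢ⟩ = yᵢ for all i; in particular the limit does not depend on the weights qᵢ^{(t)}.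 -/
open scoped RealInnerProductSpace
open Filter Topology Submodule Set

/-!
The error `e t = θ t - θ⋆` follows weighted gradient descent on `e ↦ ½ ∑ i, q t i * ⟪e, v i⟫ ^ 2`
and stays in `span (range v)`, where the Gram form `∑ i, ⟪e, v i⟫ ^ 2` is coercive because the
`v i` are linearly independent. When `η ∑ i, ‖v i‖ ^ 2 ≤ 1`, a step decreases `‖e‖ ^ 2` by at least
`η ∑ i, q t i * ⟪e, v i⟫ ^ 2`; once all weights exceed some `δ > 0` this is a fixed fraction of
`‖e‖ ^ 2`, so `e t → 0` geometrically. The limit `θ⋆` is the interpolant in `θ⁰ + span (range v)`,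
which exists and is unique because `w ↦ (⟪w, v i⟫)ᵢ` is an isomorphism from `span (range v)`
onto `ℝⁿ`.
-/

instance FiniteDimensional.span_range {K V ι : Type*} [DivisionRing K] [AddCommGroup V]
    [Module K V] [Finite ι] (v : ι → V) : FiniteDimensional K (span K (range v)) :=
  .span_of_finite K (finite_range v)

section Interpolation

variable {ι E : Type*} [NormedAddCommGroup E] [InnerProductSpace ℝ E] {v : ι → E}

theorem eq_zero_of_mem_span_of_forall_inner_eq_zero {w : E} (hw : w ∈ span ℝ (range v))
    (h : ∀ i, ⟪w, v i⟫ = 0) : w = 0 := by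
  have hle : span ℝ (range v) ≤ (ℝ ∙ w)ᗮ :=
    span_le.2 <| range_subset_iff.2 fun i => mem_orthogonal_singleton_iff_inner_right.2 (h i)
  exact inner_self_eq_zero.1 (mem_orthogonal_singleton_iff_inner_right.1 (hle hw))

variable (v) in
def spanInner : span ℝ (range v) →ₗ[ℝ] EuclideanSpace ℝ ι where
  toFun w := WithLp.toLp 2 fun i => ⟪(w : E), v i⟫
  map_add' x y := by ext i; simp [inner_add_left]
  map_smul' r x := by ext i; simp [real_inner_smul_left]

@[simp]
theorem spanInner_apply (w : span ℝ (range v)) (i : ι) : spanInner v w i = ⟪(w : E), v i⟫ :=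
  rfl

theorem spanInner_injective : Function.Injective (spanInner v) := by
  rw [← LinearMap.ker_eq_bot, LinearMap.ker_eq_bot']
  intro w hw
  exact Subtype.ext <| eq_zero_of_mem_span_of_forall_inner_eq_zero w.2 fun i => by
    simpa using congr($hw i)

theorem spanInner_bijective [Fintype ι] (hv : LinearIndependent ℝ v) :
    Function.Bijective (spanInner v) :=
  ⟨spanInner_injective, (LinearMap.injective_iff_surjective_of_finrank_eq_finrank
    (by rw [finrank_span_eq_card hv, finrank_euclideanSpace])).1 spanInner_injective⟩

theorem exists_mem_span_forall_inner_eq [Fintype ι] (hv : LinearIndependent ℝ v)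
    (z : ι → ℝ) : ∃ w ∈ span ℝ (range v), ∀ i, ⟪w, v i⟫ = z i := by
  obtain ⟨w, hw⟩ := (spanInner_bijective hv).2 (WithLp.toLp 2 z)
  exact ⟨w, w.2, fun i => by simpa using congr($hw i)⟩

theorem exists_norm_sq_le_mul_sum_inner_sq [Fintype ι] (hv : LinearIndependent ℝ v) :
    ∃ C > 0, ∀ w ∈ span ℝ (range v), ‖w‖ ^ 2 ≤ C * ∑ i, ⟪w, v i⟫ ^ 2 := by
  let L := (LinearEquiv.ofBijective _ (spanInner_bijective hv)).toContinuousLinearEquiv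
  obtain ⟨C, hC, hbound⟩ := (L.symm : EuclideanSpace ℝ ι →L[ℝ] span ℝ (range v)).bound
  refine ⟨C ^ 2, by positivity, fun w hw => ?_⟩
  have hw_le : ‖w‖ ≤ C * ‖spanInner v ⟨w, hw⟩‖ := by simpa [L] using hbound (L ⟨w, hw⟩)
  calc ‖w‖ ^ 2 ≤ (C * ‖spanInner v ⟨w, hw⟩‖) ^ 2 := pow_le_pow_left₀ (norm_nonneg _) hw_le 2
    _ = C ^ 2 * ∑ i, ⟪w, v i⟫ ^ 2 := by simp [mul_pow, EuclideanSpace.norm_sq_eq]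

end Interpolation

section Descent

variable {ι : Type*} [Fintype ι]

theorem norm_sum_mul_smul_sq_le {F : Type*} [SeminormedAddCommGroup F] [NormedSpace ℝ F]
    {w : ι → ℝ} (hw : ∀ i, 0 ≤ w i) (x : ι → ℝ) (u : ι → F) :
    ‖∑ i, (w i * x i) • u i‖ ^ 2 ≤ (∑ i, w i * ‖u i‖ ^ 2) * ∑ i, w i * x i ^ 2 := by
  have htri : ‖∑ i, (w i * x i) • u i‖ ≤ ∑ i, w i * |x i| * ‖u i‖ := by
    refine (norm_sum_le _ _).trans_eq (Finset.sum_congr rfl fun i _ => ?_)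
    rw [norm_smul, Real.norm_eq_abs, abs_mul, abs_of_nonneg (hw i)]
  calc ‖∑ i, (w i * x i) • u i‖ ^ 2 ≤ (∑ i, w i * |x i| * ‖u i‖) ^ 2 :=
        pow_le_pow_left₀ (norm_nonneg _) htri 2
    _ ≤ (∑ i, w i * ‖u i‖ ^ 2) * ∑ i, w i * x i ^ 2 :=
        Finset.sum_sq_le_sum_mul_sum_of_sq_le_mul _
          (fun i _ => mul_nonneg (hw i) (sq_nonneg _)) (fun i _ => mul_nonneg (hw i) (sq_nonneg _))
          fun i _ => le_of_eq <| by rw [mul_pow, mul_pow, sq_abs]; ring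

variable {E : Type*} [NormedAddCommGroup E] [InnerProductSpace ℝ E]

theorem norm_sub_smul_sum_inner_smul_sq_le {v : ι → E} {w : ι → ℝ} (hw : ∀ i, 0 ≤ w i) {η : ℝ}
    (hη : 0 ≤ η) (hηw : η * ∑ i, w i * ‖v i‖ ^ 2 ≤ 1) (e : E) :
    ‖e - η • ∑ i, (w i * ⟪e, v i⟫) • v i‖ ^ 2 ≤ ‖e‖ ^ 2 - η * ∑ i, w i * ⟪e, v i⟫ ^ 2 := by
  set D := ∑ i, w i * ⟪e, v i⟫ ^ 2
  have hD : 0 ≤ D := Finset.sum_nonneg fun i _ => mul_nonneg (hw i) (sq_nonneg _)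
  have hinner : ⟪e, ∑ i, (w i * ⟪e, v i⟫) • v i⟫ = D := by
    rw [inner_sum]
    exact Finset.sum_congr rfl fun i _ => by rw [real_inner_smul_right]; ring
  have hCS := norm_sum_mul_smul_sq_le hw (fun i => ⟪e, v i⟫) v
  rw [norm_sub_sq_real, real_inner_smul_right, hinner, norm_smul, mul_pow, Real.norm_eq_abs,
    sq_abs]
  nlinarith [mul_le_mul_of_nonneg_right hηw hD, mul_le_mul_of_nonneg_left hCS (sq_nonneg η)]

end Descent

theorem tendsto_zero_of_eventually_norm_sq_le_mul {F : Type*} [NormedAddCommGroup F]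
    [CompleteSpace F] {f : ℕ → F} {r : ℝ} (hr : r < 1)
    (h : ∀ᶠ n in atTop, ‖f (n + 1)‖ ^ 2 ≤ r * ‖f n‖ ^ 2) : Tendsto f atTop (𝓝 0) := by
  refine (summable_of_ratio_norm_eventually_le (r := √r) ((Real.sqrt_lt' one_pos).2 (by simpa))
    ?_).tendsto_atTop_zero
  filter_upwards [h] with n hn
  calc ‖f (n + 1)‖ = √(‖f (n + 1)‖ ^ 2) := (Real.sqrt_sq (norm_nonneg _)).symm
    _ ≤ √(r * ‖f n‖ ^ 2) := Real.sqrt_le_sqrt hn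
    _ = √r * ‖f n‖ := by rw [Real.sqrt_mul' _ (sq_nonneg _), Real.sqrt_sq (norm_nonneg _)]

theorem exists_pos_eventually_forall_le {α ι : Type*} [Finite ι] {l : Filter α}
    {q : α → ι → ℝ} {a : ι → ℝ} (hq : ∀ i, Tendsto (fun t => q t i) l (𝓝 (a i)))
    (ha : ∀ i, 0 < a i) : ∃ δ > 0, ∀ᶠ t in l, ∀ i, δ ≤ q t i := by
  obtain ⟨δ, hδ, hδa⟩ : ∃ δ > 0, ∀ i, δ < a i := by
    cases isEmpty_or_nonempty ι
    · exact ⟨1, one_pos, isEmptyElim⟩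
    · obtain ⟨i₀, hi₀⟩ := Finite.exists_min a
      exact ⟨a i₀ / 2, by linarith [ha i₀], fun i => by linarith [ha i₀, hi₀ i]⟩
  exact ⟨δ, hδ, eventually_all.2 fun i => (hq i).eventually (eventually_ge_nhds (hδa i))⟩

theorem tendsto_zero_of_weighted_gradient_step {ι E : Type*} [Fintype ι] [NormedAddCommGroup E]
    [InnerProductSpace ℝ E] [CompleteSpace E] {v : ι → E} (hv : LinearIndependent ℝ v)
    {q : ℕ → ι → ℝ} {η δ : ℝ} (hη : 0 < η) (hδ : 0 < δ) (hqδ : ∀ᶠ t in atTop, ∀ i, δ ≤ q t i)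
    (hηq : ∀ᶠ t in atTop, η * ∑ i, q t i * ‖v i‖ ^ 2 ≤ 1) {e : ℕ → E}
    (he₀ : e 0 ∈ span ℝ (range v))
    (he : ∀ t, e (t + 1) = e t - η • ∑ i, (q t i * ⟪e t, v i⟫) • v i) :
    Tendsto e atTop (𝓝 0) := by
  obtain ⟨C, hC, hcoer⟩ := exists_norm_sq_le_mul_sum_inner_sq hv
  have he_mem : ∀ t, e t ∈ span ℝ (range v) := fun t => by
    induction t with
    | zero => exact he₀
    | succ t ih =>
      rw [he t]
      exact sub_mem ih <| smul_mem _ _ <| sum_mem fun i _ =>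
        smul_mem _ _ (subset_span (mem_range_self i))
  refine tendsto_zero_of_eventually_norm_sq_le_mul (r := 1 - η * (δ / C))
    (by have : 0 < η * (δ / C) := by positivity
        linarith) ?_
  filter_upwards [hqδ, hηq] with t hδt hηt
  have hlower : δ / C * ‖e t‖ ^ 2 ≤ ∑ i, q t i * ⟪e t, v i⟫ ^ 2 :=
    calc δ / C * ‖e t‖ ^ 2 ≤ δ / C * (C * ∑ i, ⟪e t, v i⟫ ^ 2) :=
          mul_le_mul_of_nonneg_left (hcoer _ (he_mem t)) (by positivity)
      _ = ∑ i, δ * ⟪e t, v i⟫ ^ 2 := by rw [← Finset.mul_sum]; field_simp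
      _ ≤ ∑ i, q t i * ⟪e t, v i⟫ ^ 2 :=
          Finset.sum_le_sum fun i _ => mul_le_mul_of_nonneg_right (hδt i) (sq_nonneg _)
  rw [he t]
  calc ‖e t - η • ∑ i, (q t i * ⟪e t, v i⟫) • v i‖ ^ 2
      ≤ ‖e t‖ ^ 2 - η * ∑ i, q t i * ⟪e t, v i⟫ ^ 2 :=
        norm_sub_smul_sum_inner_smul_sq_le (fun i => hδ.le.trans (hδt i)) hη.le hηt (e t)
    _ ≤ (1 - η * (δ / C)) * ‖e t‖ ^ 2 := by nlinarith [mul_le_mul_of_nonneg_left hlower hη.le]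

theorem stmt_17_general {p n : ℕ}
    (v : Fin n → EuclideanSpace ℝ (Fin p))
    (hli : LinearIndependent ℝ v)
    (c y : Fin n → ℝ)
    (θ0 : EuclideanSpace ℝ (Fin p))
    (q : ℕ → Fin n → ℝ)
    (hq0 : ∀ t i, 0 ≤ q t i)
    (hq1 : ∀ t, ∑ i, q t i = 1)
    (qlim : Fin n → ℝ)
    (hqlim : ∀ i, Tendsto (fun t => q t i) atTop (nhds (qlim i)))
    (hqpos : ∀ i, 0 < qlim i) :
    ∃ η₀ > (0 : ℝ), ∀ η : ℝ, 0 < η → η ≤ η₀ →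
      ∀ θ : ℕ → EuclideanSpace ℝ (Fin p), θ 0 = θ0 →
        (∀ t, θ (t + 1) = θ t
          - η • ∑ i, (q t i * (c i + ⟪θ t - θ0, v i⟫ - y i)) • v i) →
        ∃ θstar : EuclideanSpace ℝ (Fin p),
          (θstar - θ0 ∈ Submodule.span ℝ (Set.range v) ∧
            ∀ i, c i + ⟪θstar - θ0, v i⟫ = y i) ∧
          (∀ θ' : EuclideanSpace ℝ (Fin p),
            θ' - θ0 ∈ Submodule.span ℝ (Set.range v) →
            (∀ i, c i + ⟪θ' - θ0, v i⟫ = y i) → θ' = θstar) ∧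
          Tendsto θ atTop (nhds θstar) := by
  obtain ⟨w, hw, hwv⟩ := exists_mem_span_forall_inner_eq hli (fun i => y i - c i)
  obtain ⟨δ, hδ, hqδ⟩ := exists_pos_eventually_forall_le hqlim hqpos
  have hres : ∀ θ' i, c i + ⟪θ' - θ0, v i⟫ - y i = ⟪θ' - (θ0 + w), v i⟫ := fun θ' i => by
    rw [show θ' - θ0 = θ' - (θ0 + w) + w by abel, inner_add_left, hwv]; ring
  set B := ∑ i, ‖v i‖ ^ 2
  refine ⟨1 / (1 + B), by positivity, fun η hη hηle θ hθ0 hθ =>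
    ⟨θ0 + w, ⟨by simpa using hw, fun i => by simp [hwv]⟩, fun θ' hθ' hθ'y => ?_, ?_⟩⟩
  · refine sub_eq_zero.1 (eq_zero_of_mem_span_of_forall_inner_eq_zero (v := v) ?_ fun i => ?_)
    · simpa [sub_add_eq_sub_sub] using sub_mem hθ' hw
    · linarith [hres θ' i, hθ'y i]
  have hηq : ∀ t, η * ∑ i, q t i * ‖v i‖ ^ 2 ≤ 1 := fun t => by
    have hq_le_one : ∀ i, q t i ≤ 1 := fun i =>
      hq1 t ▸ Finset.single_le_sum (fun j _ => hq0 t j) (Finset.mem_univ i)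
    have hB : ∑ i, q t i * ‖v i‖ ^ 2 ≤ B :=
      Finset.sum_le_sum fun i _ => mul_le_of_le_one_left (sq_nonneg _) (hq_le_one i)
    rw [le_div_iff₀ (by positivity)] at hηle
    nlinarith [mul_le_mul_of_nonneg_left hB hη.le]
  rw [← tendsto_sub_nhds_zero_iff]
  refine tendsto_zero_of_weighted_gradient_step hli hη hδ hqδ (.of_forall hηq)
    (by simpa [hθ0] using neg_mem hw) fun t => ?_
  simp only [hθ t, hres]
  abel

/-- GRW for an affine (linearized) model with predictions
`cᵢ + ⟨θ−θ⁰, vᵢ⟩`, squared loss, linearly independent features `vᵢ`, and weights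
satisfying Assumption 1: there is `η₀ > 0` such that for every `0 < η ≤ η₀` the
iterates converge to the unique `θ*` with `θ*−θ⁰ ∈ span{v₁,…,vₙ}` and
`cᵢ + ⟨θ*−θ⁰, vᵢ⟩ = yᵢ` for all `i` — independently of the weights. -/
theorem stmt_17 {p n : ℕ} (hn : 0 < n)
    (v : Fin n → EuclideanSpace ℝ (Fin p))
    (hli : LinearIndependent ℝ v)
    (c y : Fin n → ℝ)
    (θ0 : EuclideanSpace ℝ (Fin p))
    (q : ℕ → Fin n → ℝ)
    (hq0 : ∀ t i, 0 ≤ q t i)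
    (hq1 : ∀ t, ∑ i, q t i = 1)
    (qlim : Fin n → ℝ)
    (hqlim : ∀ i, Tendsto (fun t => q t i) atTop (nhds (qlim i)))
    (hqpos : ∀ i, 0 < qlim i) :
    ∃ η₀ > (0 : ℝ), ∀ η : ℝ, 0 < η → η ≤ η₀ →
      ∀ θ : ℕ → EuclideanSpace ℝ (Fin p), θ 0 = θ0 →
        (∀ t, θ (t + 1) = θ t
          - η • ∑ i, (q t i * (c i + ⟪θ t - θ0, v i⟫ - y i)) • v i) →
        ∃ θstar : EuclideanSpace ℝ (Fin p),
          (θstar - θ0 ∈ Submodule.span ℝ (Set.range v) ∧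
            ∀ i, c i + ⟪θstar - θ0, v i⟫ = y i) ∧
          (∀ θ' : EuclideanSpace ℝ (Fin p),
            θ' - θ0 ∈ Submodule.span ℝ (Set.range v) →
            (∀ i, c i + ⟪θ' - θ0, v i⟫ = y i) → θ' = θstar) ∧
          Tendsto θ atTop (nhds θstar) :=
  stmt_17_general v hli c y θ0 q hq0 hq1 qlim hqlim hqpos
end

section
/- Let q₁,…,qₙ ≥ 0 with Σᵢ qᵢ = 1 and q* := minᵢ qᵢ > 0, suppose x₁,…,xₙ are linearly independent, and let 0 < ε ≤ min{ q*/3, (q* λ_min)² / (12 λ_max²), 1/3 }. If q'₁,…,q'ₙ ≥ 0 satisfy Σᵢ q'ᵢ = 1 and |q'ᵢ − qᵢ| < ε for every i, then for every η > 0 and every θ ∈ ℝ^d, the updated point θ' = θ − η Σᵢ q'ᵢ xᵢ (⟨θ,xᵢ⟩ − yᵢ) satisfies F(θ') ≤ (1 − η q* λ_min + 2A² η²) F(θ). -/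
/-!
With residuals `rᵢ = ⟪θ, xᵢ⟫ - yᵢ` and `v = ∑ q'ⱼ rⱼ xⱼ`, the step replaces `rᵢ` by
`rᵢ - η ⟪v, xᵢ⟫`, so `F(θ') = F - 2η ⟪∑ qᵢ rᵢ xᵢ, v⟫ + η² ∑ qᵢ ⟪v, xᵢ⟫²`.
The cross term is a Gram form `u ⬝ G (u + δ)` with `u = q ∘ r` and `δ = (q' - q) ∘ r`:
diagonalising `G` gives `u ⬝ G u ≥ λ_min ‖u‖² ≥ λ_min q* F`, while
`|u ⬝ G δ| ≤ λ_max ‖u‖ ‖δ‖ ≤ q* λ_min F / 6` by the choice of `ε`.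
The quadratic term is at most `‖v‖² A ≤ (16/9) A² F` by Cauchy–Schwarz, since `q' ≤ (4/3) q`.
-/

open scoped RealInnerProductSpace
open Matrix

namespace Matrix.IsHermitian

variable {ι : Type*} [Fintype ι] [DecidableEq ι] {A : Matrix ι ι ℝ} (hA : A.IsHermitian)

theorem eigenvectorBasis_dotProduct (k : ι) (u : ι → ℝ) :
    ⇑(hA.eigenvectorBasis k) ⬝ᵥ u = ⟪hA.eigenvectorBasis k, WithLp.toLp 2 u⟫ := by
  rw [EuclideanSpace.inner_eq_star_dotProduct, star_trivial, dotProduct_comm]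

theorem sum_sq_eigenvectorBasis_dotProduct (u : ι → ℝ) :
    ∑ k, (⇑(hA.eigenvectorBasis k) ⬝ᵥ u) ^ 2 = u ⬝ᵥ u := by
  simp only [eigenvectorBasis_dotProduct, OrthonormalBasis.sum_sq_inner_right,
    ← real_inner_self_eq_norm_sq, EuclideanSpace.inner_toLp_toLp, star_trivial]

theorem dotProduct_mulVec_eq_sum_eigenvalues (u w : ι → ℝ) :
    u ⬝ᵥ A *ᵥ w = ∑ k, hA.eigenvalues k *
      ((⇑(hA.eigenvectorBasis k) ⬝ᵥ u) * (⇑(hA.eigenvectorBasis k) ⬝ᵥ w)) := by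
  have hw : w = ∑ k, (⇑(hA.eigenvectorBasis k) ⬝ᵥ w) • ⇑(hA.eigenvectorBasis k) := by
    have := congrArg WithLp.ofLp (hA.eigenvectorBasis.sum_repr' (WithLp.toLp 2 w))
    simpa only [eigenvectorBasis_dotProduct, WithLp.ofLp_sum, WithLp.ofLp_smul] using this.symm
  conv_lhs => rw [hw]
  simp only [mulVec_sum, mulVec_smul, mulVec_eigenvectorBasis, dotProduct_sum, dotProduct_smul,
    smul_eq_mul]
  exact Finset.sum_congr rfl fun k _ => by rw [dotProduct_comm u]; ring

theorem mul_dotProduct_self_le_dotProduct_mulVec {c : ℝ} (hc : ∀ k, c ≤ hA.eigenvalues k)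
    (u : ι → ℝ) : c * (u ⬝ᵥ u) ≤ u ⬝ᵥ A *ᵥ u := by
  rw [← hA.sum_sq_eigenvectorBasis_dotProduct, dotProduct_mulVec_eq_sum_eigenvalues, Finset.mul_sum]
  refine Finset.sum_le_sum fun k _ => ?_
  rw [← sq]
  exact mul_le_mul_of_nonneg_right (hc k) (sq_nonneg _)

theorem sq_dotProduct_mulVec_le {c : ℝ} (hc : ∀ k, |hA.eigenvalues k| ≤ c) (u w : ι → ℝ) :
    (u ⬝ᵥ A *ᵥ w) ^ 2 ≤ c ^ 2 * (u ⬝ᵥ u) * (w ⬝ᵥ w) := by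
  set a := fun k => ⇑(hA.eigenvectorBasis k) ⬝ᵥ u
  set b := fun k => ⇑(hA.eigenvectorBasis k) ⬝ᵥ w
  calc (u ⬝ᵥ A *ᵥ w) ^ 2 = (∑ k, hA.eigenvalues k * a k * b k) ^ 2 := by
        rw [hA.dotProduct_mulVec_eq_sum_eigenvalues]
        simp only [mul_assoc, a, b]
    _ ≤ (∑ k, (hA.eigenvalues k * a k) ^ 2) * ∑ k, b k ^ 2 :=
        Finset.sum_mul_sq_le_sq_mul_sq _ _ _
    _ ≤ (∑ k, c ^ 2 * a k ^ 2) * ∑ k, b k ^ 2 := by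
        refine mul_le_mul_of_nonneg_right (Finset.sum_le_sum fun k _ => ?_)
          (Finset.sum_nonneg fun k _ => sq_nonneg _)
        rw [mul_pow]
        exact mul_le_mul_of_nonneg_right (sq_le_sq.mpr ((hc k).trans (le_abs_self c)))
          (sq_nonneg _)
    _ = c ^ 2 * (u ⬝ᵥ u) * (w ⬝ᵥ w) := by
        simp only [← Finset.mul_sum, a, b, sum_sq_eigenvectorBasis_dotProduct]

end Matrix.IsHermitian

section WeightedSums

variable {ι E : Type*} [Fintype ι] [NormedAddCommGroup E] [InnerProductSpace ℝ E]

theorem sum_mul_sub_inner_sq (q r : ι → ℝ) (x : ι → E) (v : E) (η : ℝ) :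
    ∑ i, q i * (r i - η * ⟪v, x i⟫) ^ 2
      = ∑ i, q i * r i ^ 2 - 2 * η * ⟪∑ i, (q i * r i) • x i, v⟫
        + η ^ 2 * ∑ i, q i * ⟪v, x i⟫ ^ 2 := by
  simp only [sum_inner, real_inner_smul_left, Finset.mul_sum, ← Finset.sum_sub_distrib,
    ← Finset.sum_add_distrib]
  exact Finset.sum_congr rfl fun i _ => by rw [real_inner_comm (x i)]; ring

theorem sum_mul_le_mul_sum_mul {p p' f : ι → ℝ} {c : ℝ} (hp : ∀ i, p' i ≤ c * p i)
    (hf : ∀ i, 0 ≤ f i) : ∑ i, p' i * f i ≤ c * ∑ i, p i * f i := by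
  rw [Finset.mul_sum]
  exact Finset.sum_le_sum fun i _ => by
    rw [← mul_assoc]
    exact mul_le_mul_of_nonneg_right (hp i) (hf i)

theorem sum_mul_inner_sq_le {p : ι → ℝ} (hp : ∀ i, 0 ≤ p i) (v : E) (x : ι → E) :
    ∑ i, p i * ⟪v, x i⟫ ^ 2 ≤ ‖v‖ ^ 2 * ∑ i, p i * ‖x i‖ ^ 2 := by
  rw [Finset.mul_sum]
  refine Finset.sum_le_sum fun i _ => ?_
  have h : ⟪v, x i⟫ ^ 2 ≤ (‖v‖ * ‖x i‖) ^ 2 := by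
    rw [← sq_abs]
    exact pow_le_pow_left₀ (abs_nonneg _) (abs_real_inner_le_norm v (x i)) 2
  nlinarith [mul_le_mul_of_nonneg_left h (hp i)]

theorem norm_sum_mul_smul_sq_le_s18 {p : ι → ℝ} (hp : ∀ i, 0 ≤ p i) (a : ι → ℝ) (x : ι → E) :
    ‖∑ i, (p i * a i) • x i‖ ^ 2 ≤ (∑ i, p i * a i ^ 2) * ∑ i, p i * ‖x i‖ ^ 2 := by
  have hnorm : ‖∑ i, (p i * a i) • x i‖ ≤ ∑ i, p i * |a i| * ‖x i‖ := by
    refine (norm_sum_le _ _).trans (Finset.sum_le_sum fun i _ => ?_)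
    rw [norm_smul, Real.norm_eq_abs, abs_mul, abs_of_nonneg (hp i)]
  calc ‖∑ i, (p i * a i) • x i‖ ^ 2 ≤ (∑ i, p i * |a i| * ‖x i‖) ^ 2 :=
        pow_le_pow_left₀ (norm_nonneg _) hnorm 2
    _ ≤ (∑ i, p i * a i ^ 2) * ∑ i, p i * ‖x i‖ ^ 2 := by
        refine Finset.sum_sq_le_sum_mul_sum_of_sq_le_mul _
          (fun i _ => mul_nonneg (hp i) (sq_nonneg _))
          (fun i _ => mul_nonneg (hp i) (sq_nonneg _)) fun i _ => le_of_eq ?_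
        rw [← sq_abs (a i)]
        ring

end WeightedSums

section GradientStep

variable {ι E : Type*} [Fintype ι] [NormedAddCommGroup E] [InnerProductSpace ℝ E]
  {q q' r : ι → ℝ}

theorem sum_mul_inner_sum_mul_smul_sq_le (hq0 : ∀ i, 0 ≤ q i) (hq1 : ∀ i, q i ≤ 1)
    (hq'0 : ∀ i, 0 ≤ q' i) (hq'q : ∀ i, q' i ≤ 4 / 3 * q i) (x : ι → E) :
    ∑ i, q i * ⟪∑ j, (q' j * r j) • x j, x i⟫ ^ 2
      ≤ 2 * (∑ i, ‖x i‖ ^ 2) ^ 2 * ∑ i, q i * r i ^ 2 := by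
  set A := ∑ i, ‖x i‖ ^ 2
  set F := ∑ i, q i * r i ^ 2
  have hA : 0 ≤ A := Finset.sum_nonneg fun i _ => sq_nonneg _
  have hF : 0 ≤ F := Finset.sum_nonneg fun i _ => mul_nonneg (hq0 i) (sq_nonneg _)
  have hqx : 0 ≤ ∑ i, q i * ‖x i‖ ^ 2 :=
    Finset.sum_nonneg fun i _ => mul_nonneg (hq0 i) (sq_nonneg _)
  have hqA : ∑ i, q i * ‖x i‖ ^ 2 ≤ A :=
    Finset.sum_le_sum fun i _ => mul_le_of_le_one_left (sq_nonneg _) (hq1 i)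
  have hq'F : ∑ i, q' i * r i ^ 2 ≤ 4 / 3 * F := sum_mul_le_mul_sum_mul hq'q fun i => sq_nonneg _
  have hq'A : ∑ i, q' i * ‖x i‖ ^ 2 ≤ 4 / 3 * A :=
    (sum_mul_le_mul_sum_mul hq'q fun i => sq_nonneg _).trans (by linarith)
  have hv : ‖∑ j, (q' j * r j) • x j‖ ^ 2 ≤ 4 / 3 * F * (4 / 3 * A) :=
    (norm_sum_mul_smul_sq_le_s18 hq'0 r x).trans <| mul_le_mul hq'F hq'A
      (Finset.sum_nonneg fun i _ => mul_nonneg (hq'0 i) (sq_nonneg _)) (by linarith)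
  calc ∑ i, q i * ⟪∑ j, (q' j * r j) • x j, x i⟫ ^ 2
      ≤ ‖∑ j, (q' j * r j) • x j‖ ^ 2 * ∑ i, q i * ‖x i‖ ^ 2 := sum_mul_inner_sq_le hq0 _ x
    _ ≤ 4 / 3 * F * (4 / 3 * A) * A := mul_le_mul hv hqA hqx (by nlinarith)
    _ ≤ 2 * A ^ 2 * F := by nlinarith [mul_nonneg hF (mul_nonneg hA hA)]

variable [DecidableEq ι]

theorem neg_le_dotProduct_mulVec_of_abs_sub_lt {G : Matrix ι ι ℝ} (hG : G.IsHermitian)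
    {qs ε lmin lmax : ℝ} (hqs : ∀ i, qs ≤ q i) (hqs0 : 0 < qs) (hq1 : ∀ i, q i ≤ 1)
    (hnear : ∀ i, |q' i - q i| < ε) (hε0 : 0 ≤ ε) (hε : ε ≤ qs / 3)
    (hεG : lmax ^ 2 * ε ≤ (qs * lmin) ^ 2 / 12) (hlmin : 0 ≤ lmin)
    (hmax : ∀ k, |hG.eigenvalues k| ≤ lmax) :
    -(qs * lmin / 6 * ∑ i, q i * r i ^ 2)
      ≤ (fun i => q i * r i) ⬝ᵥ G *ᵥ fun i => (q' i - q i) * r i := by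
  set F := ∑ i, q i * r i ^ 2
  set u : ι → ℝ := fun i => q i * r i
  set δ : ι → ℝ := fun i => (q' i - q i) * r i
  have hq0 i : 0 ≤ q i := hqs0.le.trans (hqs i)
  have hF : 0 ≤ F := Finset.sum_nonneg fun i _ => mul_nonneg (hq0 i) (sq_nonneg _)
  have hu : u ⬝ᵥ u ≤ F := Finset.sum_le_sum fun i _ => by
    nlinarith [mul_le_mul_of_nonneg_right (hq1 i) (mul_nonneg (hq0 i) (sq_nonneg (r i)))]
  have hδ : qs * (δ ⬝ᵥ δ) ≤ ε ^ 2 * F := by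
    simp only [dotProduct, F, Finset.mul_sum]
    refine Finset.sum_le_sum fun i _ => ?_
    have h := pow_le_pow_left₀ (abs_nonneg _) (hnear i).le 2
    rw [sq_abs] at h
    nlinarith [mul_le_mul h (hqs i) hqs0.le (sq_nonneg ε), sq_nonneg (r i)]
  have hεε : lmax ^ 2 * ε ^ 2 ≤ qs ^ 3 * lmin ^ 2 / 36 := by
    nlinarith [mul_le_mul hεG hε hε0 (by positivity)]
  have hsq : (u ⬝ᵥ G *ᵥ δ) ^ 2 ≤ (qs * lmin / 6 * F) ^ 2 := by
    refine le_of_mul_le_mul_left ?_ hqs0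
    calc qs * (u ⬝ᵥ G *ᵥ δ) ^ 2 ≤ qs * (lmax ^ 2 * (u ⬝ᵥ u) * (δ ⬝ᵥ δ)) :=
          mul_le_mul_of_nonneg_left (hG.sq_dotProduct_mulVec_le hmax u δ) hqs0.le
      _ = lmax ^ 2 * (u ⬝ᵥ u) * (qs * (δ ⬝ᵥ δ)) := by ring
      _ ≤ lmax ^ 2 * F * (ε ^ 2 * F) := by
          gcongr
          exact mul_nonneg hqs0.le (Finset.sum_nonneg fun i _ => mul_self_nonneg (δ i))
      _ = lmax ^ 2 * ε ^ 2 * F ^ 2 := by ring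
      _ ≤ qs ^ 3 * lmin ^ 2 / 36 * F ^ 2 := by gcongr
      _ = qs * (qs * lmin / 6 * F) ^ 2 := by ring
  exact (abs_le_of_sq_le_sq' hsq (by positivity)).1

theorem le_inner_sum_mul_smul_of_abs_sub_lt {x : ι → E} (hG : (gram ℝ x).IsHermitian)
    {qs ε lmin lmax : ℝ} (hqs : ∀ i, qs ≤ q i) (hqs0 : 0 < qs) (hq1 : ∀ i, q i ≤ 1)
    (hnear : ∀ i, |q' i - q i| < ε) (hε0 : 0 ≤ ε) (hε : ε ≤ qs / 3)
    (hεG : lmax ^ 2 * ε ≤ (qs * lmin) ^ 2 / 12) (hlmin : 0 ≤ lmin)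
    (hmin : ∀ k, lmin ≤ hG.eigenvalues k) (hmax : ∀ k, hG.eigenvalues k ≤ lmax) :
    qs * lmin / 2 * ∑ i, q i * r i ^ 2
      ≤ ⟪∑ i, (q i * r i) • x i, ∑ i, (q' i * r i) • x i⟫ := by
  set F := ∑ i, q i * r i ^ 2
  set u : ι → ℝ := fun i => q i * r i
  set δ : ι → ℝ := fun i => (q' i - q i) * r i
  have hq0 i : 0 ≤ q i := hqs0.le.trans (hqs i)
  have hF : 0 ≤ F := Finset.sum_nonneg fun i _ => mul_nonneg (hq0 i) (sq_nonneg _)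
  have hsplit : ⟪∑ i, (q i * r i) • x i, ∑ i, (q' i * r i) • x i⟫
      = u ⬝ᵥ gram ℝ x *ᵥ u + u ⬝ᵥ gram ℝ x *ᵥ δ := by
    have hw : (fun i => q' i * r i) = u + δ :=
      funext fun i => by simp only [Pi.add_apply, u, δ]; ring
    rw [← dotProduct_add, ← mulVec_add, ← hw, ← star_trivial u, star_dotProduct_gram_mulVec]
  have hu : qs * F ≤ u ⬝ᵥ u := by
    rw [Finset.mul_sum]
    exact Finset.sum_le_sum fun i _ => by
      nlinarith [mul_le_mul_of_nonneg_right (hqs i) (mul_nonneg (hq0 i) (sq_nonneg (r i)))]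
  have hmain : lmin * (qs * F) ≤ u ⬝ᵥ gram ℝ x *ᵥ u :=
    (mul_le_mul_of_nonneg_left hu hlmin).trans
      (hG.mul_dotProduct_self_le_dotProduct_mulVec hmin u)
  have hpert := neg_le_dotProduct_mulVec_of_abs_sub_lt (r := r) hG hqs hqs0 hq1 hnear hε0 hε hεG
    hlmin fun k => abs_le.mpr ⟨by linarith [hmin k, hmax k], hmax k⟩
  rw [hsplit]
  nlinarith [mul_nonneg (mul_nonneg hqs0.le hlmin) hF]

end GradientStep

theorem stmt_18_general {d n : ℕ}
    (x : Fin n → EuclideanSpace ℝ (Fin d)) (y : Fin n → ℝ)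
    (q : Fin n → ℝ) (hq0 : ∀ i, 0 ≤ q i) (hq1 : ∑ i, q i = 1)
    (qstar : ℝ) (hqstar : qstar = ⨅ i, q i) (hqpos : 0 < qstar)
    (hG : (Matrix.of fun i j => ⟪x i, x j⟫ : Matrix (Fin n) (Fin n) ℝ).IsHermitian)
    (lammin lammax : ℝ)
    (hlammin : lammin = ⨅ i, hG.eigenvalues i)
    (hlammax : lammax = ⨆ i, hG.eigenvalues i)
    (hlamminpos : 0 < lammin)
    (A : ℝ) (hA : A = ∑ i, ‖x i‖ ^ 2)
    (ε : ℝ) (hε0 : 0 < ε)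
    (hε : ε ≤ min (qstar / 3) (min ((qstar * lammin) ^ 2 / (12 * lammax ^ 2)) (1 / 3)))
    (q' : Fin n → ℝ) (hq'0 : ∀ i, 0 ≤ q' i)
    (hq'near : ∀ i, |q' i - q i| < ε) :
    ∀ η : ℝ, 0 < η → ∀ θ : EuclideanSpace ℝ (Fin d),
      (∑ i, q i * (⟪θ - η • ∑ j, (q' j * (⟪θ, x j⟫ - y j)) • x j, x i⟫ - y i) ^ 2)
        ≤ (1 - η * qstar * lammin + 2 * A ^ 2 * η ^ 2)
            * ∑ i, q i * (⟪θ, x i⟫ - y i) ^ 2 := by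
  intro η hη θ
  have hqs i : qstar ≤ q i := hqstar ▸ ciInf_le (Set.finite_range q).bddBelow i
  have hq_le_one i : q i ≤ 1 :=
    hq1 ▸ Finset.single_le_sum (fun j _ => hq0 j) (Finset.mem_univ i)
  have hεq : ε ≤ qstar / 3 := hε.trans (min_le_left _ _)
  have hεG : lammax ^ 2 * ε ≤ (qstar * lammin) ^ 2 / 12 := by
    rw [mul_comm]
    refine mul_le_of_le_div₀ (by positivity) (sq_nonneg _) ?_
    rw [div_div]
    exact hε.trans ((min_le_right _ _).trans (min_le_left _ _))
  have hmin k : lammin ≤ hG.eigenvalues k := hlammin ▸ ciInf_le (Set.finite_range _).bddBelow k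
  have hmax k : hG.eigenvalues k ≤ lammax := hlammax ▸ le_ciSup (Set.finite_range _).bddAbove k
  have hq'q i : q' i ≤ 4 / 3 * q i := by linarith [(abs_lt.mp (hq'near i)).2, hqs i]
  set r : Fin n → ℝ := fun i => ⟪θ, x i⟫ - y i
  have hstep i : ⟪θ - η • ∑ j, (q' j * r j) • x j, x i⟫ - y i
      = r i - η * ⟪∑ j, (q' j * r j) • x j, x i⟫ := by
    rw [inner_sub_left, real_inner_smul_left]; ring
  rw [Finset.sum_congr rfl fun i _ => by rw [hstep i], sum_mul_sub_inner_sq]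
  have hcross := le_inner_sum_mul_smul_of_abs_sub_lt (r := r) hG hqs hqpos hq_le_one hq'near
    hε0.le hεq hεG hlamminpos.le hmin hmax
  have hquad := sum_mul_inner_sum_mul_smul_sq_le (r := r) hq0 hq_le_one hq'0 hq'q x
  rw [← hA] at hquad
  nlinarith [mul_le_mul_of_nonneg_left hcross hη.le, mul_le_mul_of_nonneg_left hquad (sq_nonneg η)]

/-- Descent inequality for dynamic GRW with perturbed weights.
If `|q'ᵢ − qᵢ| < ε` with `ε ≤ min{q*/3, (q*λ_min)²/(12λ_max²), 1/3}`, then one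
gradient step with weights `q'` satisfies
`F(θ') ≤ (1 − η q* λ_min + 2A²η²) F(θ)`, where `F(θ) = Σᵢ qᵢ(⟨θ,xᵢ⟩−yᵢ)²` and
`A = Σᵢ‖xᵢ‖²`. -/
theorem stmt_18 {d n : ℕ} (hn : 0 < n)
    (x : Fin n → EuclideanSpace ℝ (Fin d)) (y : Fin n → ℝ)
    (hli : LinearIndependent ℝ x)
    (q : Fin n → ℝ) (hq0 : ∀ i, 0 ≤ q i) (hq1 : ∑ i, q i = 1)
    (qstar : ℝ) (hqstar : qstar = ⨅ i, q i) (hqpos : 0 < qstar)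
    (hG : (Matrix.of fun i j => ⟪x i, x j⟫ : Matrix (Fin n) (Fin n) ℝ).IsHermitian)
    (lammin lammax : ℝ)
    (hlammin : lammin = ⨅ i, hG.eigenvalues i)
    (hlammax : lammax = ⨆ i, hG.eigenvalues i)
    (hlamminpos : 0 < lammin)
    (A : ℝ) (hA : A = ∑ i, ‖x i‖ ^ 2)
    (ε : ℝ) (hε0 : 0 < ε)
    (hε : ε ≤ min (qstar / 3) (min ((qstar * lammin) ^ 2 / (12 * lammax ^ 2)) (1 / 3)))
    (q' : Fin n → ℝ) (hq'0 : ∀ i, 0 ≤ q' i) (hq'1 : ∑ i, q' i = 1)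
    (hq'near : ∀ i, |q' i - q i| < ε) :
    ∀ η : ℝ, 0 < η → ∀ θ : EuclideanSpace ℝ (Fin d),
      (∑ i, q i * (⟪θ - η • ∑ j, (q' j * (⟪θ, x j⟫ - y j)) • x j, x i⟫ - y i) ^ 2)
        ≤ (1 - η * qstar * lammin + 2 * A ^ 2 * η ^ 2)
            * ∑ i, q i * (⟪θ, x i⟫ - y i) ^ 2 :=
  stmt_18_general x y q hq0 hq1 qstar hqstar hqpos hG lammin lammax hlammin hlammax hlamminpos A hA
    ε hε0 hε q' hq'0 hq'near
end
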